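/- There is an absolute constant C such that for every ν > 1, every R ≥ 1 and every Schwartz function f : ℝ² → ℂ: ‖f‖_{L^∞(ℝ²)} ≤ C ( R^{1/2} · ‖f‖_{H¹}^{1/2} ‖f‖_{L²}^{1/2} + (ν−1)^{−1/2} · R^{1−ν} · ‖f‖_{H^ν} ). -/

import Mathlib

/-!
Fourier inversion bounds `|f y|` by `‖f̂‖_{L¹}`; split the frequency plane at `|ξ| = R` and write
`w ξ = 1 + |ξ|²`. On the disc, Cauchy–Schwarz with the weight `w^{1/2}` bounds the `L¹` norm by
`(∫_{|ξ| ≤ R} w^{-1/2})^{1/2} (∫ w^{1/2} |f̂|²)^{1/2}`; in the plane the first integral is at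
most `2πR`, and a second Cauchy–Schwarz together with Plancherel bounds the last integral by
`‖f‖_{H¹} ‖f‖_{L²}`. Outside the disc, Cauchy–Schwarz with the weight `w^ν` and
`∫_{|ξ| > R} w^{-ν} ≤ π R^{2-2ν} / (ν - 1)` give the second term. Both weight integrals are
radial and are computed in polar coordinates.
-/

open MeasureTheory

noncomputable section

abbrev E2 := EuclideanSpace ℝ (Fin 2)

/-- The Sobolev `H^s` norm of a function on `ℝ²`, defined via the Fourier
transform: `‖f‖_{H^s} = (∫ (1+|ξ|²)^s |f̂(ξ)|² dξ)^{1/2}`. -/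
def sobNorm (s : ℝ) (f : E2 → ℂ) : ℝ :=
  (∫ ξ : E2, (1 + ‖ξ‖ ^ 2) ^ s * ‖FourierTransform.fourier f ξ‖ ^ 2) ^ ((1:ℝ) / 2)

open Real Set Metric FourierTransform
open scoped SchwartzMap

section CauchySchwarz

variable {α F : Type*} [MeasurableSpace α] {μ : Measure α} [NormedAddCommGroup F]

theorem integral_mul_le_L2_mul_L2_of_nonneg {u v : α → ℝ} (hu : 0 ≤ᵐ[μ] u) (hv : 0 ≤ᵐ[μ] v)
    (hu2 : MemLp u 2 μ) (hv2 : MemLp v 2 μ) :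
    ∫ a, u a * v a ∂μ ≤ (∫ a, u a ^ 2 ∂μ) ^ (1 / 2 : ℝ) * (∫ a, v a ^ 2 ∂μ) ^ (1 / 2 : ℝ) := by
  simpa using integral_mul_le_Lp_mul_Lq_of_nonneg HolderConjugate.two_two hu hv
    (by simpa using hu2) (by simpa using hv2)

theorem MeasureTheory.Integrable.memLp_two_sqrt {h : α → ℝ} (hh : Integrable h μ)
    (h0 : 0 ≤ᵐ[μ] h) : MemLp (fun a => √(h a)) 2 μ :=
  (memLp_two_iff_integrable_sq (continuous_sqrt.comp_aestronglyMeasurable hh.1)).2 <|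
    hh.congr (h0.mono fun _ ha => (sq_sqrt ha).symm)

theorem integral_norm_le_of_weight {w : α → ℝ} {g : α → F} (hw : ∀ a, 0 < w a)
    (hw_inv : Integrable (fun a => (w a)⁻¹) μ) (hwg : Integrable (fun a => w a * ‖g a‖ ^ 2) μ) :
    ∫ a, ‖g a‖ ∂μ ≤
      (∫ a, (w a)⁻¹ ∂μ) ^ (1 / 2 : ℝ) * (∫ a, w a * ‖g a‖ ^ 2 ∂μ) ^ (1 / 2 : ℝ) := by
  have hcs := integral_mul_le_L2_mul_L2_of_nonneg (ae_of_all μ fun _ => sqrt_nonneg _)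
    (ae_of_all μ fun _ => sqrt_nonneg _)
    (hw_inv.memLp_two_sqrt (ae_of_all μ fun a => (inv_pos.2 (hw a)).le))
    (hwg.memLp_two_sqrt (ae_of_all μ fun a => by have := hw a; positivity))
  have hsplit : ∀ a, √(w a)⁻¹ * √(w a * ‖g a‖ ^ 2) = ‖g a‖ := fun a => by
    rw [← sqrt_mul (inv_pos.2 (hw a)).le, inv_mul_cancel_left₀ (hw a).ne', sqrt_sq (norm_nonneg _)]
  simpa only [hsplit, sq_sqrt (inv_pos.2 (hw _)).le,
    sq_sqrt (mul_nonneg (hw _).le (sq_nonneg ‖g _‖))] using hcs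

end CauchySchwarz

namespace SchwartzMap

variable {E F : Type*} [NormedAddCommGroup E] [InnerProductSpace ℝ E] [FiniteDimensional ℝ E]
  [MeasurableSpace E] [BorelSpace E] [NormedAddCommGroup F]

theorem integrable_one_add_norm_sq_rpow_mul_norm_sq [NormedSpace ℝ F] (g : 𝓢(E, F)) (s : ℝ)
    (μ : Measure E := by volume_tac) [μ.HasTemperateGrowth] :
    Integrable (fun x => (1 + ‖x‖ ^ 2) ^ s * ‖g x‖ ^ 2) μ := by
  have hw := Function.hasTemperateGrowth_one_add_norm_sq_rpow E (s / 2)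
  refine (((smulLeftCLM F (fun x : E => (1 + ‖x‖ ^ 2) ^ (s / 2)) g).memLp 2 μ).integrable_norm_pow
    two_ne_zero).congr (ae_of_all μ fun x => ?_)
  have h1 : (0 : ℝ) ≤ 1 + ‖x‖ ^ 2 := by positivity
  dsimp only
  rw [smulLeftCLM_apply_apply hw, norm_smul, mul_pow, norm_of_nonneg (rpow_nonneg h1 _),
    ← rpow_mul_natCast h1]
  ring_nf

theorem norm_le_integral_norm_fourier [NormedSpace ℂ F] [CompleteSpace F] (f : 𝓢(E, F)) (x : E) :
    ‖f x‖ ≤ ∫ ξ, ‖𝓕 f ξ‖ := by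
  calc ‖f x‖ = ‖𝓕⁻ (𝓕 f) x‖ := by rw [fourierInv_fourier_eq]
    _ = ‖𝓕 (𝓕 f) (-x)‖ := rfl
    _ ≤ ∫ ξ, ‖𝓕 f ξ‖ := (norm_fourier_apply_le_toLp_one _ _).trans_eq norm_toLp_one

end SchwartzMap

theorem closedBall_zero_eq_preimage_norm {E : Type*} [SeminormedAddGroup E] (R : ℝ) :
    closedBall (0 : E) R = norm ⁻¹' Iic R := by
  ext; simp

section Polar

variable {E F : Type*} [NormedAddCommGroup E] [NormedSpace ℝ E] [Nontrivial E]
  [FiniteDimensional ℝ E] [MeasurableSpace E] [BorelSpace E] [NormedAddCommGroup F]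
  [NormedSpace ℝ F]

theorem setIntegral_fun_norm_preimage_addHaar (μ : Measure E) [μ.IsAddHaarMeasure] (f : ℝ → F)
    {s : Set ℝ} (hs : MeasurableSet s) :
    ∫ x in norm ⁻¹' s, f ‖x‖ ∂μ = Module.finrank ℝ E • μ.real (ball 0 1) •
      ∫ y in s ∩ Ioi 0, y ^ (Module.finrank ℝ E - 1) • f y := by
  have hind : (norm ⁻¹' s).indicator (fun x : E => f ‖x‖) = fun x => s.indicator f ‖x‖ :=
    funext fun _ => indicator_comp_right (g := f) norm
  rw [← integral_indicator (hs.preimage measurable_norm), hind,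
    integral_fun_norm_addHaar μ (s.indicator f), ← Measure.restrict_restrict hs,
    ← integral_indicator hs]
  congr 3 with y
  by_cases hy : y ∈ s <;> simp [hy]

end Polar

theorem setIntegral_fun_norm_preimage_E2 (f : ℝ → ℝ) {s : Set ℝ} (hs : MeasurableSet s) :
    ∫ ξ : E2 in norm ⁻¹' s, f ‖ξ‖ = 2 * π * ∫ y in s ∩ Ioi 0, y * f y := by
  rw [setIntegral_fun_norm_preimage_addHaar volume f hs]
  simp [measureReal_def, pi_nonneg, mul_assoc]

theorem integral_closedBall_inv_one_add_norm_sq_rpow_half_le {R : ℝ} (hR : 0 ≤ R) :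
    ∫ ξ in closedBall (0 : E2) R, ((1 + ‖ξ‖ ^ 2) ^ (1 / 2 : ℝ))⁻¹ ≤ 2 * π * R := by
  rw [closedBall_zero_eq_preimage_norm,
    setIntegral_fun_norm_preimage_E2 (fun r => ((1 + r ^ 2) ^ (1 / 2 : ℝ))⁻¹) measurableSet_Iic,
    Iic_inter_Ioi]
  have hle_one : ∀ y ∈ Ioc 0 R, ‖y * ((1 + y ^ 2) ^ (1 / 2 : ℝ))⁻¹‖ ≤ 1 := fun y hy => by
    have hy0 : 0 ≤ y := hy.1.le
    rw [norm_of_nonneg (by positivity), ← div_eq_mul_inv, div_le_one (by positivity),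
      ← sqrt_eq_rpow]
    exact le_sqrt_of_sq_le (by linarith)
  gcongr
  calc _ ≤ ‖∫ y in Ioc 0 R, y * ((1 + y ^ 2) ^ (1 / 2 : ℝ))⁻¹‖ := le_norm_self _
    _ ≤ 1 * volume.real (Ioc 0 R) :=
      norm_setIntegral_le_of_norm_le_const measure_Ioc_lt_top hle_one
    _ = R := by rw [one_mul, volume_real_Ioc_of_le hR, sub_zero]

theorem integral_compl_closedBall_inv_one_add_norm_sq_rpow_le {ν R : ℝ} (hν : 1 < ν)
    (hR : 0 < R) :
    ∫ ξ in (closedBall (0 : E2) R)ᶜ, ((1 + ‖ξ‖ ^ 2) ^ ν)⁻¹ ≤ π / (ν - 1) * R ^ (2 - 2 * ν) := by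
  rw [closedBall_zero_eq_preimage_norm, ← preimage_compl, compl_Iic,
    setIntegral_fun_norm_preimage_E2 (fun r => ((1 + r ^ 2) ^ ν)⁻¹) measurableSet_Ioi,
    Ioi_inter_Ioi, max_eq_left hR.le]
  have hmono : ∫ y in Ioi R, y * ((1 + y ^ 2) ^ ν)⁻¹ ≤ ∫ y in Ioi R, y ^ (1 - 2 * ν) := by
    refine integral_mono_of_nonneg ?_ (integrableOn_Ioi_rpow_of_lt (by linarith) hR) ?_
    · filter_upwards [ae_restrict_mem measurableSet_Ioi] with y (hy : R < y)
      have : 0 < y := hR.trans hy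
      positivity
    · filter_upwards [ae_restrict_mem measurableSet_Ioi] with y (hy : R < y)
      have hy0 : 0 < y := hR.trans hy
      calc y * ((1 + y ^ 2) ^ ν)⁻¹ ≤ y * ((y ^ 2) ^ ν)⁻¹ := by gcongr; linarith
        _ = y ^ (1 - 2 * ν) := by
          rw [← rpow_natCast, ← rpow_mul hy0.le, rpow_sub hy0, rpow_one, div_eq_mul_inv]
          norm_num
  rw [integral_Ioi_rpow_of_lt (by linarith) hR] at hmono
  calc 2 * π * ∫ y in Ioi R, y * ((1 + y ^ 2) ^ ν)⁻¹
      ≤ 2 * π * (-R ^ (1 - 2 * ν + 1) / (1 - 2 * ν + 1)) := by gcongr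
    _ = π / (ν - 1) * R ^ (2 - 2 * ν) := by
      have h1 : ν - 1 ≠ 0 := by linarith
      have h2 : 1 - ν ≠ 0 := by linarith
      rw [show 1 - 2 * ν + 1 = 2 - 2 * ν by ring]
      generalize R ^ (2 - 2 * ν) = X
      field_simp
      ring

theorem sobNorm_nonneg (s : ℝ) (f : E2 → ℂ) : 0 ≤ sobNorm s f :=
  rpow_nonneg (integral_nonneg fun _ => by positivity) _

theorem integral_one_add_norm_sq_rpow_half_mul_norm_sq_fourier_le (f : 𝓢(E2, ℂ)) :
    ∫ ξ, (1 + ‖ξ‖ ^ 2) ^ (1 / 2 : ℝ) * ‖𝓕 f ξ‖ ^ 2 ≤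
      sobNorm 1 ⇑f * (∫ x, ‖f x‖ ^ 2) ^ (1 / 2 : ℝ) := by
  have hcs := integral_mul_le_L2_mul_L2_of_nonneg (ae_of_all _ fun _ => sqrt_nonneg _)
    (ae_of_all _ fun _ => norm_nonneg _)
    (((𝓕 f).integrable_one_add_norm_sq_rpow_mul_norm_sq 1).memLp_two_sqrt
      (ae_of_all _ fun _ => by positivity))
    ((𝓕 f).memLp 2).norm
  have hsplit : ∀ ξ : E2, √((1 + ‖ξ‖ ^ 2) ^ (1 : ℝ) * ‖𝓕 f ξ‖ ^ 2) * ‖𝓕 f ξ‖ =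
      (1 + ‖ξ‖ ^ 2) ^ (1 / 2 : ℝ) * ‖𝓕 f ξ‖ ^ 2 := fun ξ => by
    rw [sqrt_mul (by positivity), sqrt_sq (norm_nonneg _), rpow_one, sqrt_eq_rpow]
    ring
  have hsq : ∀ ξ : E2, √((1 + ‖ξ‖ ^ 2) ^ (1 : ℝ) * ‖𝓕 f ξ‖ ^ 2) ^ 2 =
      (1 + ‖ξ‖ ^ 2) ^ (1 : ℝ) * ‖𝓕 f ξ‖ ^ 2 := fun ξ => sq_sqrt (by positivity)
  simp only [hsplit, hsq, SchwartzMap.integral_norm_sq_fourier] at hcs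
  exact hcs

theorem integral_closedBall_norm_fourier_le (f : 𝓢(E2, ℂ)) {R : ℝ} (hR : 0 ≤ R) :
    ∫ ξ in closedBall (0 : E2) R, ‖𝓕 f ξ‖ ≤ √(2 * π) * (R ^ (1 / 2 : ℝ) *
      sobNorm 1 ⇑f ^ (1 / 2 : ℝ) * ((∫ x, ‖f x‖ ^ 2) ^ (1 / 2 : ℝ)) ^ (1 / 2 : ℝ)) := by
  have hw := (𝓕 f).integrable_one_add_norm_sq_rpow_mul_norm_sq (1 / 2)
  have hw_inv : IntegrableOn (fun ξ : E2 => ((1 + ‖ξ‖ ^ 2) ^ (1 / 2 : ℝ))⁻¹) (closedBall 0 R) :=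
    ContinuousOn.integrableOn_compact (isCompact_closedBall 0 R)
      (by fun_prop (disch := intros; positivity))
  calc ∫ ξ in closedBall (0 : E2) R, ‖𝓕 f ξ‖
      ≤ (∫ ξ in closedBall (0 : E2) R, ((1 + ‖ξ‖ ^ 2) ^ (1 / 2 : ℝ))⁻¹) ^ (1 / 2 : ℝ) *
          (∫ ξ in closedBall (0 : E2) R, (1 + ‖ξ‖ ^ 2) ^ (1 / 2 : ℝ) * ‖𝓕 f ξ‖ ^ 2) ^ (1 / 2 : ℝ) :=
        integral_norm_le_of_weight (fun _ => by positivity) hw_inv hw.integrableOn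
    _ ≤ (2 * π * R) ^ (1 / 2 : ℝ) *
          (sobNorm 1 ⇑f * (∫ x, ‖f x‖ ^ 2) ^ (1 / 2 : ℝ)) ^ (1 / 2 : ℝ) := by
        gcongr
        · exact integral_closedBall_inv_one_add_norm_sq_rpow_half_le hR
        · exact (setIntegral_le_integral hw (ae_of_all _ fun _ => by positivity)).trans
            (integral_one_add_norm_sq_rpow_half_mul_norm_sq_fourier_le f)
    _ = _ := by
        rw [sqrt_eq_rpow, mul_rpow (by positivity) hR, mul_rpow (by positivity) (by positivity),
          mul_rpow (sobNorm_nonneg 1 f) (by positivity)]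
        ring

theorem integral_compl_closedBall_norm_fourier_le (f : 𝓢(E2, ℂ)) {ν R : ℝ} (hν : 1 < ν)
    (hR : 0 < R) :
    ∫ ξ in (closedBall (0 : E2) R)ᶜ, ‖𝓕 f ξ‖ ≤
      √π * ((ν - 1) ^ (-(1 : ℝ) / 2) * R ^ (1 - ν) * sobNorm ν ⇑f) := by
  have hw := (𝓕 f).integrable_one_add_norm_sq_rpow_mul_norm_sq ν
  have hw_inv : Integrable (fun ξ : E2 => ((1 + ‖ξ‖ ^ 2) ^ ν)⁻¹) := by
    refine (integrable_rpow_neg_one_add_norm_sq (r := 2 * ν) (by simp; linarith)).congr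
      (ae_of_all _ fun ξ => ?_)
    dsimp only
    rw [← rpow_neg (by positivity)]
    ring_nf
  calc ∫ ξ in (closedBall (0 : E2) R)ᶜ, ‖𝓕 f ξ‖
      ≤ (∫ ξ in (closedBall (0 : E2) R)ᶜ, ((1 + ‖ξ‖ ^ 2) ^ ν)⁻¹) ^ (1 / 2 : ℝ) *
          (∫ ξ in (closedBall (0 : E2) R)ᶜ, (1 + ‖ξ‖ ^ 2) ^ ν * ‖𝓕 f ξ‖ ^ 2) ^ (1 / 2 : ℝ) :=
        integral_norm_le_of_weight (fun _ => by positivity) hw_inv.integrableOn hw.integrableOn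
    _ ≤ (π / (ν - 1) * R ^ (2 - 2 * ν)) ^ (1 / 2 : ℝ) * sobNorm ν ⇑f := by
        gcongr
        · exact integral_compl_closedBall_inv_one_add_norm_sq_rpow_le hν hR
        · exact rpow_le_rpow (integral_nonneg fun _ => by positivity)
            (setIntegral_le_integral hw (ae_of_all _ fun _ => by positivity)) (by norm_num)
    _ = _ := by
        have hν1 : 0 ≤ ν - 1 := by linarith
        rw [mul_rpow (by positivity) (by positivity), div_rpow pi_nonneg hν1, ← rpow_mul hR.le,
          ← sqrt_eq_rpow, div_eq_mul_inv, ← rpow_neg hν1]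
        ring_nf

/-- Brezis–Gallouët-type endpoint estimate with free frequency-splitting
parameter `R`: `‖f‖_∞ ≤ C (R^{1/2} ‖f‖_{H¹}^{1/2} ‖f‖_{L²}^{1/2}
+ (ν-1)^{-1/2} R^{1-ν} ‖f‖_{H^ν})`. -/
theorem brezis_gallouet_endpoint :
    ∃ C : ℝ, 0 < C ∧ ∀ (ν R : ℝ), 1 < ν → 1 ≤ R →
      ∀ (f : SchwartzMap E2 ℂ) (y : E2),
        ‖f y‖ ≤ C * (R ^ ((1:ℝ) / 2) * (sobNorm 1 ⇑f) ^ ((1:ℝ) / 2) *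
            ((∫ x : E2, ‖f x‖ ^ 2) ^ ((1:ℝ) / 2)) ^ ((1:ℝ) / 2)
          + (ν - 1) ^ (-(1:ℝ) / 2) * R ^ (1 - ν) * sobNorm ν ⇑f) := by
  refine ⟨√(2 * π), by positivity, fun ν R hν hR f y => ?_⟩
  have hR0 : 0 < R := by linarith
  have hhigh_nonneg : 0 ≤ (ν - 1) ^ (-(1 : ℝ) / 2) * R ^ (1 - ν) * sobNorm ν ⇑f := by
    have := sobNorm_nonneg ν f
    have : 0 ≤ ν - 1 := by linarith
    positivity
  have hπ : √π ≤ √(2 * π) := sqrt_le_sqrt (by linarith [pi_pos])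
  calc ‖f y‖ ≤ ∫ ξ, ‖𝓕 f ξ‖ := f.norm_le_integral_norm_fourier y
    _ = (∫ ξ in closedBall (0 : E2) R, ‖𝓕 f ξ‖) + ∫ ξ in (closedBall (0 : E2) R)ᶜ, ‖𝓕 f ξ‖ :=
        (integral_add_compl measurableSet_closedBall (𝓕 f).integrable.norm).symm
    _ ≤ _ := by
        rw [mul_add]
        exact add_le_add (integral_closedBall_norm_fourier_le f hR0.le)
          ((integral_compl_closedBall_norm_fourier_le f hν hR0).trans
            (mul_le_mul_of_nonneg_right hπ hhigh_nonneg))
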